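/- Every wall X (of any order n ≥ 1) admits a proper incidence coloring φ : Inc(X) → [3], i.e., using only 3 colors, despite having maximum degree 3. -/

import Mathlib

open SimpleGraph
open scoped Classical

noncomputable instance setFintypeOfFintype {V : Type} [Fintype V] (s : Set V) : Fintype ↥s :=
  (Set.toFinite s).fintype

/-- Treedepth, defined recursively as in the paper. -/
noncomputable def treedepth {V : Type} [Fintype V] (G : SimpleGraph V) : ℕ :=
  if hV : IsEmpty V then 0
  else if hc : G.Connected then
    1 + ⨅ v : V, treedepth (G.induce {x | x ≠ v})
  else
    ⨆ c : G.ConnectedComponent, treedepth (G.induce c.supp)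
termination_by Fintype.card V
decreasing_by
  · have h := Fintype.card_subtype_lt (p := fun x => x ≠ v) (x := v) (by simp)
    convert h using 2 <;> rfl
  · obtain ⟨u, _⟩ := Quot.exists_rep c
    by_cases hu : u ∈ c.supp
    · haveI : Nonempty V := not_isEmpty_iff.mp hV
      have hpre : ¬ G.Preconnected := fun hp => hc ⟨hp⟩
      rw [SimpleGraph.Preconnected] at hpre
      push_neg at hpre
      obtain ⟨a, b, hab⟩ := hpre
      have hor : a ∉ c.supp ∨ b ∉ c.supp := by
        by_contra h
        push_neg at h
        obtain ⟨ha, hb⟩ := h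
        rw [SimpleGraph.ConnectedComponent.mem_supp_iff] at ha hb
        exact hab (SimpleGraph.ConnectedComponent.exact (ha.trans hb.symm))
      obtain hx | hx := hor
      · have h := Fintype.card_subtype_lt (p := fun x => x ∈ c.supp) (x := a) hx
        convert h using 2
      · have h := Fintype.card_subtype_lt (p := fun x => x ∈ c.supp) (x := b) hx
        convert h using 2
    · have h := Fintype.card_subtype_lt (p := fun x => x ∈ c.supp) (x := u) hu
      convert h using 2
/-- A tree decomposition of width at most `k`. -/
def HasTreeDecompositionOfWidthLE {V : Type} (G : SimpleGraph V) (k : ℕ) : Prop :=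
  ∃ (ι : Type) (T : SimpleGraph ι) (bag : ι → Finset V),
    T.IsTree ∧
    (∀ v : V, (T.induce {x | v ∈ bag x}).Connected) ∧
    (∀ u v : V, G.Adj u v → ∃ x, u ∈ bag x ∧ v ∈ bag x) ∧
    (∀ x, (bag x).card ≤ k + 1)

/-- Treewidth: minimum width of a tree decomposition. -/
noncomputable def treewidth {V : Type} (G : SimpleGraph V) : ℕ :=
  sInf {k | HasTreeDecompositionOfWidthLE G k}

/-- A path decomposition of width at most `k`. -/
def HasPathDecompositionOfWidthLE {V : Type} (G : SimpleGraph V) (k : ℕ) : Prop :=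
  ∃ (n : ℕ) (bag : Fin n → Finset V),
    (∀ v : V, ((SimpleGraph.pathGraph n).induce {x | v ∈ bag x}).Connected) ∧
    (∀ u v : V, G.Adj u v → ∃ x, u ∈ bag x ∧ v ∈ bag x) ∧
    (∀ x, (bag x).card ≤ k + 1)

/-- Pathwidth: minimum width of a path decomposition. -/
noncomputable def pathwidth {V : Type} (G : SimpleGraph V) : ℕ :=
  sInf {k | HasPathDecompositionOfWidthLE G k}

/-- The radius of a graph: the least `r` such that some vertex is within distance `r`
of every vertex. -/
noncomputable def graphRadius {V : Type} (G : SimpleGraph V) : ℕ :=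
  sInf {r | ∃ u : V, ∀ v : V, G.dist u v ≤ r}

/-- A proper incidence coloring: the two incidences of an edge get different colors, and
incidences at a common vertex get different colors. -/
def IsProperIncidenceColoring {V : Type} (X : SimpleGraph V) {κ : ℕ}
    (φ : V → Sym2 V → Fin κ) : Prop :=
  (∀ u v : V, X.Adj u v → φ u s(u, v) ≠ φ v s(u, v)) ∧
  (∀ u v w : V, X.Adj u v → X.Adj u w → v ≠ w → φ u s(u, v) ≠ φ u s(u, w))

/-- `H` is isometric in `G`: distances in `H` agree with distances in `G`. -/
def SimpleGraph.Subgraph.IsIsometric {V : Type} {G : SimpleGraph V} (H : G.Subgraph) : Prop :=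
  ∀ x y : H.verts, H.coe.dist x y = G.dist x y

/-- A family of subgraphs edge covers `G` if every edge of `G` lies in some member. -/
def EdgeCover {V : Type} {G : SimpleGraph V} {ι : Type} (H : ι → G.Subgraph) : Prop :=
  ∀ u v : V, G.Adj u v → ∃ i, (H i).Adj u v

/-- `A` embeds in `X` as a (not necessarily induced) subgraph. -/
def IsSubgraphEmbeddable {W U : Type} (A : SimpleGraph W) (X : SimpleGraph U) : Prop :=
  ∃ f : W → U, Function.Injective f ∧ ∀ u v : W, A.Adj u v → X.Adj (f u) (f v)

/-- `H ∈ Apex(X)`: some vertex of `H` can be removed so that every connected component of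
the rest is a subgraph of `X`. -/
def InApex {W U : Type} (H : SimpleGraph W) (X : SimpleGraph U) : Prop :=
  ∃ a : W, ∀ c : (H.induce {x | x ≠ a}).ConnectedComponent,
    IsSubgraphEmbeddable ((H.induce {x | x ≠ a}).induce c.supp) X

/-- The star on `Δ+1` vertices with every edge subdivided once:
`none` is the center, `some (i, false)` the subdivision vertices, `some (i, true)` the leaves. -/
def subdividedStar (Δ : ℕ) : SimpleGraph (Option (Fin Δ × Bool)) :=
  SimpleGraph.fromRel (fun p q =>
    (p = none ∧ ∃ i, q = some (i, false)) ∨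
    (∃ i, p = some (i, false) ∧ q = some (i, true)))

/-- `H` is a minor of `G`, witnessed by branch sets. -/
def IsMinorOf {W V : Type} (H : SimpleGraph W) (G : SimpleGraph V) : Prop :=
  ∃ B : W → Set V, (∀ w, (G.induce (B w)).Connected) ∧
    (Pairwise fun w w' => Disjoint (B w) (B w')) ∧
    (∀ w w', H.Adj w w' → ∃ u ∈ B w, ∃ v ∈ B w', G.Adj u v)

/-- The `n × m` grid graph. -/
def gridGraph (n m : ℕ) : SimpleGraph (Fin n × Fin m) :=
  (SimpleGraph.pathGraph n).boxProd (SimpleGraph.pathGraph m)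

/-- The wall of order `n`: the `n × (2n+1)` grid with the vertical edges `(a,b)(a+1,b)`
removed whenever `a` and `b` have different parity. -/
def wall (n : ℕ) : SimpleGraph (Fin n × Fin (2 * n + 1)) :=
  SimpleGraph.fromRel (fun p q =>
    (p.1 = q.1 ∧ p.2.val + 1 = q.2.val) ∨
    (p.2 = q.2 ∧ p.1.val + 1 = q.1.val ∧ p.1.val % 2 = p.2.val % 2))

/-- The graph obtained from `G` by subdividing the edge `uv` once: the edge `uv` is removed
and the new vertex `Sum.inr ()` is joined to `u` and `v`. -/
def subdivideEdge {V : Type} (G : SimpleGraph V) (u v : V) : SimpleGraph (V ⊕ Unit) :=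
  SimpleGraph.fromRel (fun p q =>
    (∃ a b, p = Sum.inl a ∧ q = Sum.inl b ∧ G.Adj a b ∧ s(a, b) ≠ s(u, v)) ∨
    (∃ a, p = Sum.inl a ∧ q = Sum.inr () ∧ (a = u ∨ a = v)))

/-- `H` is a subdivision of `G`. -/
inductive IsSubdivisionOf : {V W : Type} → SimpleGraph V → SimpleGraph W → Prop
  | of_iso {V W : Type} {H : SimpleGraph V} {G : SimpleGraph W} (e : H ≃g G) :
      IsSubdivisionOf H G
  | step {V W : Type} {H : SimpleGraph V} {G : SimpleGraph W} {u v : W} (huv : G.Adj u v)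
      (h : IsSubdivisionOf H (subdivideEdge G u v)) : IsSubdivisionOf H G

/-- The `c`-subdivision of `X`: every edge of `X` is replaced by a path with `c` internal
vertices. The internal vertices of the edge `e` are `Sum.inr (e, 0), …, Sum.inr (e, c-1)`,
ordered from the endpoint `(Quot.out e).1` to the endpoint `(Quot.out e).2`. -/
def csubdivision {V : Type} (X : SimpleGraph V) (c : ℕ) :
    SimpleGraph (V ⊕ (↥X.edgeSet × Fin c)) :=
  SimpleGraph.fromRel (fun p q =>
    (∃ (u : V) (e : X.edgeSet) (i : Fin c),
        p = Sum.inl u ∧ q = Sum.inr (e, i) ∧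
        ((u = (Quot.out (e : Sym2 V)).1 ∧ i.val = 0) ∨
         (u = (Quot.out (e : Sym2 V)).2 ∧ i.val = c - 1))) ∨
    (∃ (e : X.edgeSet) (i j : Fin c), p = Sum.inr (e, i) ∧ q = Sum.inr (e, j) ∧
        i.val + 1 = j.val))

/-! At a vertex in row `a` of the wall, colour the incidence towards the left neighbour `0`,
towards the right neighbour `1 + a % 2`, and towards the (at most one) vertical neighbour
`2 - a % 2`. The three incidences at a vertex get distinct colours, a horizontal edge joins a
right incidence (colour `≠ 0`) to a left one (colour `0`), and a vertical edge joins two rows of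
different parity, whose vertical colours differ. -/

section IncidenceColoring

variable {V : Type} {κ : ℕ}

noncomputable def incidenceColoringOfDarts (c : V → V → Fin κ) (u : V) (e : Sym2 V) : Fin κ :=
  c u (if h : u ∈ e then Sym2.Mem.other h else u)

@[simp]
lemma incidenceColoringOfDarts_mk (c : V → V → Fin κ) (u v : V) :
    incidenceColoringOfDarts c u s(u, v) = c u v := by
  rw [incidenceColoringOfDarts, dif_pos (Sym2.mem_mk_left u v),
    Sym2.congr_right.mp (Sym2.other_spec (Sym2.mem_mk_left u v))]

lemma isProperIncidenceColoring_incidenceColoringOfDarts_iff (X : SimpleGraph V)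
    (c : V → V → Fin κ) :
    IsProperIncidenceColoring X (incidenceColoringOfDarts c) ↔
      (∀ u v, X.Adj u v → c u v ≠ c v u) ∧
      (∀ u v w, X.Adj u v → X.Adj u w → v ≠ w → c u v ≠ c u w) := by
  have mk_swap (u v : V) : incidenceColoringOfDarts c v s(u, v) = c v u := by
    rw [Sym2.eq_swap, incidenceColoringOfDarts_mk]
  simp only [IsProperIncidenceColoring, incidenceColoringOfDarts_mk, mk_swap]

end IncidenceColoring

def wallDartColor (n : ℕ) (u v : Fin n × Fin (2 * n + 1)) : Fin 3 :=
  if u.1 = v.1 then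
    if u.2 < v.2 then ⟨1 + u.1.val % 2, by omega⟩ else 0
  else ⟨2 - u.1.val % 2, by omega⟩

lemma wall_adj {n : ℕ} {u v : Fin n × Fin (2 * n + 1)} :
    (wall n).Adj u v ↔
      (u.1 = v.1 ∧ (u.2.val + 1 = v.2.val ∨ v.2.val + 1 = u.2.val)) ∨
      (u.2 = v.2 ∧ (u.1.val + 1 = v.1.val ∧ u.1.val % 2 = u.2.val % 2 ∨
        v.1.val + 1 = u.1.val ∧ v.1.val % 2 = v.2.val % 2)) := by
  simp only [wall, fromRel_adj, ne_eq, Prod.ext_iff, Fin.ext_iff]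
  omega

lemma wallDartColor_ne_swap {n : ℕ} {u v : Fin n × Fin (2 * n + 1)} (h : (wall n).Adj u v) :
    wallDartColor n u v ≠ wallDartColor n v u := by
  rw [wall_adj] at h
  rw [Ne, Fin.ext_iff]
  simp only [wallDartColor, Fin.ext_iff, Fin.lt_def] at h ⊢
  split_ifs <;> simp only [Fin.val_zero] <;> omega

/-- A vertex has at most one vertical neighbour: the parity condition admits the edge to the row
above or the edge to the row below, never both. -/
lemma wallDartColor_ne_of_ne {n : ℕ} {u v w : Fin n × Fin (2 * n + 1)} (hv : (wall n).Adj u v)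
    (hw : (wall n).Adj u w) (hvw : v ≠ w) :
    wallDartColor n u v ≠ wallDartColor n u w := by
  rw [wall_adj] at hv hw
  rw [Ne, Fin.ext_iff]
  simp only [wallDartColor, Prod.ext_iff, Fin.ext_iff, Fin.lt_def, ne_eq] at hv hw hvw ⊢
  split_ifs <;> simp only [Fin.val_zero] <;> omega

theorem stmt14_general (n : ℕ) :
    ∃ φ : (Fin n × Fin (2 * n + 1)) → Sym2 (Fin n × Fin (2 * n + 1)) → Fin 3,
      IsProperIncidenceColoring (wall n) φ :=
  ⟨incidenceColoringOfDarts (wallDartColor n),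
    (isProperIncidenceColoring_incidenceColoringOfDarts_iff _ _).mpr
      ⟨fun _ _ h => wallDartColor_ne_swap h, fun _ _ _ => wallDartColor_ne_of_ne⟩⟩

theorem stmt14 (n : ℕ) (hn : 1 ≤ n) :
    ∃ φ : (Fin n × Fin (2 * n + 1)) → Sym2 (Fin n × Fin (2 * n + 1)) → Fin 3,
      IsProperIncidenceColoring (wall n) φ :=
  stmt14_general n
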